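/- arXiv:2207.11220 — 2 statements merged into one kernel-verified Lean document; each statement's English description precedes it below -/
import Mathlib

section
/- Every iterate X_t of the fixed point iteration X₀ = 0, X_{t+1} = D(X_t) is symmetric positive semidefinite, the matrix I_{rn} + BBᵀ(X_t ⊗ I_r) is invertible for every t, and the sequence is monotonically nondecreasing: X_t ⪯ X_{t+1} for all t ≥ 0. -/
/-! For `Y ⪰ 0` the matrix `1 + Bᵀ Y B` is positive definite, so `1 + B Bᵀ Y` (which has the
same determinant) is invertible, and completing the square in the feedback gain `K` gives
`Aᵀ Y (1 + B Bᵀ Y)⁻¹ A = min_K (A - B K)ᵀ Y (A - B K) + Kᵀ K`, the minimum being attained at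
`K = (1 + Bᵀ Y B)⁻¹ Bᵀ Y A`. Each expression under the minimum is monotone in `Y`, hence so is
the Riccati operator on the positive semidefinite cone, which it maps into itself. Starting
from `X₀ = 0 ⪯ X₁`, the iterates therefore increase. -/

open Matrix
open scoped Kronecker

/-- The SDARE Riccati operator `D(X) = Aᵀ (X ⊗ I_r) (I + B Bᵀ (X ⊗ I_r))⁻¹ A + Cᵀ C`,
with `rn` realized as the index type `Fin n × Fin r`. -/
noncomputable def Dop {n m l r : ℕ}
    (A : Matrix (Fin n × Fin r) (Fin n) ℝ)
    (B : Matrix (Fin n × Fin r) (Fin m) ℝ)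
    (C : Matrix (Fin l) (Fin n) ℝ)
    (X : Matrix (Fin n) (Fin n) ℝ) : Matrix (Fin n) (Fin n) ℝ :=
  Aᵀ * (X ⊗ₖ (1 : Matrix (Fin r) (Fin r) ℝ)) *
      (1 + B * Bᵀ * (X ⊗ₖ (1 : Matrix (Fin r) (Fin r) ℝ)))⁻¹ * A + Cᵀ * C

open Set
open scoped MatrixOrder ComplexOrder

theorem Set.MapsTo.orbit_mem_Ici_and_le_succ {α : Type*} [Preorder α] {f : α → α} {a : α}
    (hmaps : MapsTo f (Ici a) (Ici a)) (hmono : MonotoneOn f (Ici a)) {x : ℕ → α}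
    (h0 : x 0 = a) (hstep : ∀ t, x (t + 1) = f (x t)) (t : ℕ) :
    a ≤ x t ∧ x t ≤ x (t + 1) := by
  induction t with
  | zero => rw [hstep, h0]; exact ⟨le_rfl, hmaps (mem_Ici.2 le_rfl)⟩
  | succ t ih =>
    have ha : a ≤ x (t + 1) := ih.1.trans ih.2
    refine ⟨ha, ?_⟩
    calc x (t + 1) = f (x t) := hstep t
      _ ≤ f (x (t + 1)) := hmono ih.1 ha ih.2
      _ = x (t + 1 + 1) := (hstep _).symm

namespace Matrix

theorem sub_kronecker {α ι κ μ ν : Type*} [Ring α] (A₁ A₂ : Matrix ι κ α) (B : Matrix μ ν α) :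
    (A₁ - A₂) ⊗ₖ B = A₁ ⊗ₖ B - A₂ ⊗ₖ B := by
  ext
  simp [sub_mul]

theorem kronecker_mono_left {𝕜 ι μ : Type*} [RCLike 𝕜] [Fintype ι] [Fintype μ]
    {Z : Matrix μ μ 𝕜} (hZ : Z.PosSemidef) : Monotone fun X : Matrix ι ι 𝕜 => X ⊗ₖ Z :=
  fun _ _ h => by rw [le_iff, ← sub_kronecker]; exact (le_iff.mp h).kronecker hZ

theorem transpose_mul_mul_le_transpose_mul_mul {ι ν : Type*} [Fintype ι] [Fintype ν]
    {Y₁ Y₂ : Matrix ι ι ℝ} (h : Y₁ ≤ Y₂) (M : Matrix ι ν ℝ) : Mᵀ * Y₁ * M ≤ Mᵀ * Y₂ * M := by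
  rw [le_iff, ← Matrix.sub_mul, ← Matrix.mul_sub]
  simpa using (le_iff.mp h).conjTranspose_mul_mul_same M

variable {ι κ ν : Type*} [Fintype ι] [Fintype κ] [DecidableEq κ] {Y : Matrix ι ι ℝ}

theorem PosSemidef.posDef_one_add_transpose_mul_mul (hY : Y.PosSemidef) (B : Matrix ι κ ℝ) :
    (1 + Bᵀ * Y * B).PosDef :=
  PosDef.one.add_posSemidef (by simpa using hY.conjTranspose_mul_mul_same B)

variable [DecidableEq ι]

noncomputable def riccatiMap (A : Matrix ι ν ℝ) (B : Matrix ι κ ℝ) (Y : Matrix ι ι ℝ) :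
    Matrix ν ν ℝ :=
  Aᵀ * Y * (1 + B * Bᵀ * Y)⁻¹ * A

noncomputable def riccatiGain (A : Matrix ι ν ℝ) (B : Matrix ι κ ℝ) (Y : Matrix ι ι ℝ) :
    Matrix κ ν ℝ :=
  (1 + Bᵀ * Y * B)⁻¹ * (Bᵀ * Y * A)

theorem PosSemidef.isUnit_one_add_mul_transpose_mul (hY : Y.PosSemidef) (B : Matrix ι κ ℝ) :
    IsUnit (1 + B * Bᵀ * Y) := by
  rw [isUnit_iff_isUnit_det, Matrix.mul_assoc, det_one_add_mul_comm]
  exact (hY.posDef_one_add_transpose_mul_mul B).det_pos.ne'.isUnit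

theorem PosSemidef.mul_inv_one_add_mul_transpose_mul (hY : Y.PosSemidef) (B : Matrix ι κ ℝ) :
    Y * (1 + B * Bᵀ * Y)⁻¹ = Y - Y * B * (1 + Bᵀ * Y * B)⁻¹ * Bᵀ * Y := by
  set G := 1 + Bᵀ * Y * B
  have hG : G⁻¹ * G = 1 :=
    nonsing_inv_mul _ (hY.posDef_one_add_transpose_mul_mul B).det_pos.ne'.isUnit
  have hinv : (Y - Y * B * G⁻¹ * Bᵀ * Y) * (1 + B * Bᵀ * Y) = Y := by
    have expand : (Y - Y * B * G⁻¹ * Bᵀ * Y) * (1 + B * Bᵀ * Y)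
        = Y + Y * B * (1 - G⁻¹ * G) * Bᵀ * Y := by
      simp only [G, Matrix.mul_add, Matrix.add_mul, Matrix.mul_sub, Matrix.sub_mul,
        Matrix.mul_one, Matrix.mul_assoc]
      abel
    rw [expand, hG, sub_self, Matrix.mul_zero, Matrix.zero_mul, Matrix.zero_mul, add_zero]
  calc Y * (1 + B * Bᵀ * Y)⁻¹
      = (Y - Y * B * G⁻¹ * Bᵀ * Y) * (1 + B * Bᵀ * Y) * (1 + B * Bᵀ * Y)⁻¹ := by rw [hinv]
    _ = Y - Y * B * G⁻¹ * Bᵀ * Y := by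
      rw [Matrix.mul_assoc, mul_nonsing_inv _ ((isUnit_iff_isUnit_det _).mp
        (hY.isUnit_one_add_mul_transpose_mul B)), Matrix.mul_one]

theorem PosSemidef.riccatiMap_add_completedSquare (hY : Y.PosSemidef) (A : Matrix ι ν ℝ)
    (B : Matrix ι κ ℝ) (K : Matrix κ ν ℝ) :
    riccatiMap A B Y + (K - riccatiGain A B Y)ᵀ * (1 + Bᵀ * Y * B) * (K - riccatiGain A B Y)
      = (A - B * K)ᵀ * Y * (A - B * K) + Kᵀ * K := by
  set G := 1 + Bᵀ * Y * B
  set L := riccatiGain A B Y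
  have hYt : Yᵀ = Y := (show Y.IsSymm by simpa using hY.1).eq
  have hGt : Gᵀ = G := by simp [G, hYt, Matrix.mul_assoc]
  have hGL : G * L = Bᵀ * Y * A := by
    rw [show L = G⁻¹ * (Bᵀ * Y * A) from rfl, ← Matrix.mul_assoc,
      mul_nonsing_inv _ (hY.posDef_one_add_transpose_mul_mul B).det_pos.ne'.isUnit,
      Matrix.one_mul]
  have hLG : Lᵀ * G = Aᵀ * Y * B := by
    rw [← hGt, ← transpose_mul, hGL]
    simp [hYt, Matrix.mul_assoc]
  have hR : riccatiMap A B Y = Aᵀ * Y * A - Lᵀ * G * L := by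
    rw [riccatiMap, Matrix.mul_assoc Aᵀ Y, hY.mul_inv_one_add_mul_transpose_mul B, hLG]
    simp only [L, riccatiGain, Matrix.mul_sub, Matrix.sub_mul, Matrix.mul_assoc]
  calc riccatiMap A B Y + (K - L)ᵀ * G * (K - L)
      = Aᵀ * Y * A + Kᵀ * G * K - Kᵀ * (G * L) - (Lᵀ * G) * K := by
        rw [hR]
        simp only [transpose_sub, Matrix.sub_mul, Matrix.mul_sub, Matrix.mul_assoc]
        abel
    _ = (A - B * K)ᵀ * Y * (A - B * K) + Kᵀ * K := by
        rw [hGL, hLG]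
        simp only [G, transpose_sub, transpose_mul, Matrix.mul_add, Matrix.add_mul,
          Matrix.mul_sub, Matrix.sub_mul, Matrix.mul_one, Matrix.mul_assoc]
        abel

theorem PosSemidef.riccatiMap_eq_closedLoop (hY : Y.PosSemidef) (A : Matrix ι ν ℝ)
    (B : Matrix ι κ ℝ) :
    riccatiMap A B Y = (A - B * riccatiGain A B Y)ᵀ * Y * (A - B * riccatiGain A B Y)
      + (riccatiGain A B Y)ᵀ * riccatiGain A B Y := by
  simpa using hY.riccatiMap_add_completedSquare A B (riccatiGain A B Y)

variable [Fintype ν]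

theorem PosSemidef.riccatiMap_le (hY : Y.PosSemidef) (A : Matrix ι ν ℝ) (B : Matrix ι κ ℝ)
    (K : Matrix κ ν ℝ) : riccatiMap A B Y ≤ (A - B * K)ᵀ * Y * (A - B * K) + Kᵀ * K := by
  rw [← hY.riccatiMap_add_completedSquare A B K]
  refine le_add_of_nonneg_right (nonneg_iff_posSemidef.mpr ?_)
  simpa using (hY.posDef_one_add_transpose_mul_mul B).posSemidef.conjTranspose_mul_mul_same
    (K - riccatiGain A B Y)

theorem riccatiMap_monotoneOn (A : Matrix ι ν ℝ) (B : Matrix ι κ ℝ) :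
    MonotoneOn (riccatiMap A B) (Ici 0) := by
  intro Y₁ hY₁ Y₂ hY₂ h
  set L := riccatiGain A B Y₂
  calc riccatiMap A B Y₁
      ≤ (A - B * L)ᵀ * Y₁ * (A - B * L) + Lᵀ * L :=
        (nonneg_iff_posSemidef.mp hY₁).riccatiMap_le A B L
    _ ≤ (A - B * L)ᵀ * Y₂ * (A - B * L) + Lᵀ * L :=
        add_le_add_left (transpose_mul_mul_le_transpose_mul_mul h _) _
    _ = riccatiMap A B Y₂ := ((nonneg_iff_posSemidef.mp hY₂).riccatiMap_eq_closedLoop A B).symm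

end Matrix

section Dop

variable {n m l r : ℕ} (A : Matrix (Fin n × Fin r) (Fin n) ℝ)
  (B : Matrix (Fin n × Fin r) (Fin m) ℝ) (C : Matrix (Fin l) (Fin n) ℝ)

theorem Dop_eq_riccatiMap (X : Matrix (Fin n) (Fin n) ℝ) :
    Dop A B C X = riccatiMap A B (X ⊗ₖ (1 : Matrix (Fin r) (Fin r) ℝ)) + Cᵀ * C :=
  rfl

theorem Dop_monotoneOn : MonotoneOn (Dop A B C) (Ici 0) := by
  intro X₁ hX₁ X₂ hX₂ h
  have hI : (1 : Matrix (Fin r) (Fin r) ℝ).PosSemidef := PosSemidef.one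
  have hY : ∀ {X : Matrix (Fin n) (Fin n) ℝ}, 0 ≤ X → 0 ≤ X ⊗ₖ (1 : Matrix (Fin r) (Fin r) ℝ) :=
    fun hX => (hX.posSemidef.kronecker hI).nonneg
  rw [Dop_eq_riccatiMap, Dop_eq_riccatiMap]
  exact add_le_add_left
    (riccatiMap_monotoneOn A B (hY hX₁) (hY hX₂) (kronecker_mono_left hI h)) _

theorem mapsTo_Dop : MapsTo (Dop A B C) (Ici 0) (Ici 0) := by
  intro X hX
  calc (0 : Matrix (Fin n) (Fin n) ℝ)
      ≤ Cᵀ * C := by simpa using (posSemidef_conjTranspose_mul_self C).nonneg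
    _ = Dop A B C 0 := by simp [Dop]
    _ ≤ Dop A B C X := Dop_monotoneOn A B C (mem_Ici.2 le_rfl) hX hX

end Dop

theorem stmt1_general {n m l r : ℕ}
    (A : Matrix (Fin n × Fin r) (Fin n) ℝ)
    (B : Matrix (Fin n × Fin r) (Fin m) ℝ)
    (C : Matrix (Fin l) (Fin n) ℝ)
    (Xseq : ℕ → Matrix (Fin n) (Fin n) ℝ)
    (h0 : Xseq 0 = 0)
    (hstep : ∀ t, Xseq (t + 1) = Dop A B C (Xseq t)) :
    ∀ t, (Xseq t).PosSemidef ∧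
      IsUnit (1 + B * Bᵀ * (Xseq t ⊗ₖ (1 : Matrix (Fin r) (Fin r) ℝ))) ∧
      (Xseq (t + 1) - Xseq t).PosSemidef := by
  intro t
  obtain ⟨hX, hle⟩ :=
    (mapsTo_Dop A B C).orbit_mem_Ici_and_le_succ (Dop_monotoneOn A B C) h0 hstep t
  exact ⟨hX.posSemidef,
    (hX.posSemidef.kronecker PosSemidef.one).isUnit_one_add_mul_transpose_mul B, le_iff.mp hle⟩

theorem stmt1 {n m l r : ℕ} (hn : 0 < n) (hm : 0 < m) (hl : 0 < l) (hr : 0 < r)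
    (A : Matrix (Fin n × Fin r) (Fin n) ℝ)
    (B : Matrix (Fin n × Fin r) (Fin m) ℝ)
    (C : Matrix (Fin l) (Fin n) ℝ)
    (Xseq : ℕ → Matrix (Fin n) (Fin n) ℝ)
    (h0 : Xseq 0 = 0)
    (hstep : ∀ t, Xseq (t + 1) = Dop A B C (Xseq t)) :
    ∀ t, (Xseq t).PosSemidef ∧
      IsUnit (1 + B * Bᵀ * (Xseq t ⊗ₖ (1 : Matrix (Fin r) (Fin r) ℝ))) ∧
      (Xseq (t + 1) - Xseq t).PosSemidef :=
  stmt1_general A B C Xseq h0 hstep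
end

section
/- Let X⋆, X ∈ ℝ^{n×n} be symmetric such that I_{rn} + BBᵀ(X⋆ ⊗ I_r) and I_{rn} + BBᵀ(X ⊗ I_r) are invertible. Set A⋆ = (I_{rn} + BBᵀ(X⋆ ⊗ I_r))⁻¹A, B⋆ = (I_{rn} + BBᵀ(X⋆ ⊗ I_r))⁻¹BBᵀ, and Δ = X⋆ − X. Then the matrix I_{rn} − B⋆(Δ ⊗ I_r) is invertible and D(X⋆) − D(X) = A⋆ᵀ(Δ ⊗ I_r)(I_{rn} − B⋆(Δ ⊗ I_r))⁻¹A⋆. Moreover, if I_m + Bᵀ(X⋆ ⊗ I_r)B is invertible then B⋆ = B(I_m + Bᵀ(X⋆ ⊗ I_r)B)⁻¹Bᵀ, so B⋆ is symmetric positive semidefinite whenever X⋆ ⪰ 0. -/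
open Matrix
open scoped Kronecker

/-!
Write `K_Y = 1 + S Y` with `S = B Bᵀ` and `Y = X ⊗ I_r`, so that `D(X) = Aᵀ Y K_Y⁻¹ A + Cᵀ C`.
The push-through identity `Y (1 + S Y)⁻¹ = (1 + Y S)⁻¹ Y` and `Y (1 + S Z) - (1 + Y S) Z = Y - Z`
give `Y K_Y⁻¹ - Z K_Z⁻¹ = K_Yᵀ⁻¹ (Y - Z) K_Z⁻¹`; the factorisation `1 - K_Y⁻¹ S (Y - Z) = K_Y⁻¹ K_Z`
turns `K_Z⁻¹` into `(1 - K_Y⁻¹ S (Y - Z))⁻¹ K_Y⁻¹`. Push-through once more, now along `B`, gives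
`K_Y⁻¹ B Bᵀ = B (1 + Bᵀ Y B)⁻¹ Bᵀ`, a congruence of `(1 + Bᵀ Y B)⁻¹`, which is positive definite
when `Y ⪰ 0`.
-/

namespace Matrix

theorem sub_kronecker_s4 {l m n p α : Type*} [Ring α] (P Q : Matrix l m α) (M : Matrix n p α) :
    (P - Q) ⊗ₖ M = P ⊗ₖ M - Q ⊗ₖ M := by
  ext
  simp [sub_mul]

theorem IsSymm.kronecker {l n α : Type*} [Mul α] {P : Matrix l l α} {Q : Matrix n n α}
    (hP : P.IsSymm) (hQ : Q.IsSymm) : (P ⊗ₖ Q).IsSymm := by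
  rw [IsSymm, ← kroneckerMap_transpose, hP.eq, hQ.eq]

variable {ι κ R : Type*} [Fintype ι] [CommRing R]

theorem inv_mul_eq_mul_inv_of_mul_eq_mul [DecidableEq ι] [Fintype κ] [DecidableEq κ]
    {P : Matrix ι ι R} {Q : Matrix κ κ R} {U : Matrix ι κ R} (hP : IsUnit P) (hQ : IsUnit Q) (h : P * U = U * Q) :
    P⁻¹ * U = U * Q⁻¹ :=
  calc P⁻¹ * U = P⁻¹ * (U * Q) * Q⁻¹ := by
        rw [← Matrix.mul_assoc,
          mul_nonsing_inv_cancel_right _ _ ((isUnit_iff_isUnit_det Q).mp hQ)]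
    _ = U * Q⁻¹ := by
        rw [← h, nonsing_inv_mul_cancel_left _ _ ((isUnit_iff_isUnit_det P).mp hP)]

section
variable [DecidableEq ι]

theorem isUnit_one_add_mul_comm {S Y : Matrix ι ι R} (h : IsUnit (1 + S * Y)) :
    IsUnit (1 + Y * S) := by
  rwa [isUnit_iff_isUnit_det, det_one_add_mul_comm, ← isUnit_iff_isUnit_det]

theorem mul_inv_one_add_mul_sub_mul_inv_one_add_mul {S Y Z : Matrix ι ι R}
    (hY : IsUnit (1 + S * Y)) (hZ : IsUnit (1 + S * Z)) :
    Y * (1 + S * Y)⁻¹ - Z * (1 + S * Z)⁻¹ = (1 + Y * S)⁻¹ * (Y - Z) * (1 + S * Z)⁻¹ := by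
  have hY' := isUnit_one_add_mul_comm hY
  have hpush : Y * (1 + S * Y)⁻¹ = (1 + Y * S)⁻¹ * Y :=
    (inv_mul_eq_mul_inv_of_mul_eq_mul hY' hY (by noncomm_ring)).symm
  have hsplit : Y - Z = Y * (1 + S * Z) - (1 + Y * S) * Z := by noncomm_ring
  rw [hpush, hsplit, Matrix.mul_sub, Matrix.sub_mul, ← Matrix.mul_assoc,
    Matrix.mul_nonsing_inv_cancel_right _ _ ((isUnit_iff_isUnit_det _).mp hZ),
    ← Matrix.mul_assoc, nonsing_inv_mul _ ((isUnit_iff_isUnit_det _).mp hY'), Matrix.one_mul]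

theorem one_sub_inv_one_add_mul_mul_sub {S Y : Matrix ι ι R} (Z : Matrix ι ι R)
    (hY : IsUnit (1 + S * Y)) :
    1 - (1 + S * Y)⁻¹ * S * (Y - Z) = (1 + S * Y)⁻¹ * (1 + S * Z) :=
  calc 1 - (1 + S * Y)⁻¹ * S * (Y - Z)
      = (1 + S * Y)⁻¹ * (1 + S * Y) - (1 + S * Y)⁻¹ * (S * (Y - Z)) := by
        rw [nonsing_inv_mul _ ((isUnit_iff_isUnit_det _).mp hY), Matrix.mul_assoc]
    _ = (1 + S * Y)⁻¹ * (1 + S * Z) := by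
        rw [← Matrix.mul_sub]
        congr 1
        noncomm_ring

theorem isUnit_one_sub_inv_one_add_mul_mul_sub {S Y Z : Matrix ι ι R}
    (hY : IsUnit (1 + S * Y)) (hZ : IsUnit (1 + S * Z)) :
    IsUnit (1 - (1 + S * Y)⁻¹ * S * (Y - Z)) := by
  rw [one_sub_inv_one_add_mul_mul_sub Z hY]
  exact (isUnit_nonsing_inv_iff.mpr hY).mul hZ

noncomputable def riccatiTerm (A : Matrix ι κ R) (S Y : Matrix ι ι R) : Matrix κ κ R :=
  Aᵀ * Y * (1 + S * Y)⁻¹ * A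

theorem riccatiTerm_sub {S Y Z : Matrix ι ι R} (hS : S.IsSymm) (hYs : Y.IsSymm)
    (hY : IsUnit (1 + S * Y)) (hZ : IsUnit (1 + S * Z)) (A : Matrix ι κ R) :
    riccatiTerm A S Y - riccatiTerm A S Z =
      ((1 + S * Y)⁻¹ * A)ᵀ * (Y - Z) * (1 - (1 + S * Y)⁻¹ * S * (Y - Z))⁻¹ *
        ((1 + S * Y)⁻¹ * A) := by
  have hYd := (isUnit_iff_isUnit_det _).mp hY
  have htr : (1 + S * Y)⁻¹ᵀ = (1 + Y * S)⁻¹ := by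
    rw [transpose_nonsing_inv, transpose_add, transpose_one, transpose_mul, hS.eq, hYs.eq]
  have hinv : (1 - (1 + S * Y)⁻¹ * S * (Y - Z))⁻¹ * (1 + S * Y)⁻¹ = (1 + S * Z)⁻¹ := by
    rw [one_sub_inv_one_add_mul_mul_sub Z hY, mul_inv_rev, nonsing_inv_nonsing_inv _ hYd,
      Matrix.mul_assoc, mul_nonsing_inv _ hYd, Matrix.mul_one]
  calc riccatiTerm A S Y - riccatiTerm A S Z
      = Aᵀ * (Y * (1 + S * Y)⁻¹ - Z * (1 + S * Z)⁻¹) * A := by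
        simp only [riccatiTerm, Matrix.mul_sub, Matrix.sub_mul, Matrix.mul_assoc]
    _ = Aᵀ * (1 + Y * S)⁻¹ * (Y - Z) * (1 + S * Z)⁻¹ * A := by
        rw [mul_inv_one_add_mul_sub_mul_inv_one_add_mul hY hZ]
        simp only [Matrix.mul_assoc]
    _ = _ := by
        rw [transpose_mul, htr, ← hinv]
        simp only [Matrix.mul_assoc]

end

open scoped ComplexOrder in
theorem PosSemidef.mul_inv_one_add_conjTranspose_mul_mul_mul_conjTranspose [Fintype κ]
    [DecidableEq κ] {𝕜 : Type*} [RCLike 𝕜]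
    {Y : Matrix ι ι 𝕜} (hY : Y.PosSemidef) (B : Matrix ι κ 𝕜) :
    (B * (1 + Bᴴ * Y * B)⁻¹ * Bᴴ).PosSemidef :=
  (PosSemidef.one.add (hY.conjTranspose_mul_mul_same B)).inv.mul_mul_conjTranspose_same B

end Matrix

theorem stmt4_general {n m l r : ℕ}
    (A : Matrix (Fin n × Fin r) (Fin n) ℝ)
    (B : Matrix (Fin n × Fin r) (Fin m) ℝ)
    (C : Matrix (Fin l) (Fin n) ℝ)
    (Xs X : Matrix (Fin n) (Fin n) ℝ)
    (hXs : Xs.IsHermitian)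
    (hKs : IsUnit (1 + B * Bᵀ * (Xs ⊗ₖ (1 : Matrix (Fin r) (Fin r) ℝ))))
    (hK : IsUnit (1 + B * Bᵀ * (X ⊗ₖ (1 : Matrix (Fin r) (Fin r) ℝ))))
    (As : Matrix (Fin n × Fin r) (Fin n) ℝ)
    (Bs : Matrix (Fin n × Fin r) (Fin n × Fin r) ℝ)
    (Δ : Matrix (Fin n) (Fin n) ℝ)
    (hAs : As = (1 + B * Bᵀ * (Xs ⊗ₖ (1 : Matrix (Fin r) (Fin r) ℝ)))⁻¹ * A)
    (hBs : Bs = (1 + B * Bᵀ * (Xs ⊗ₖ (1 : Matrix (Fin r) (Fin r) ℝ)))⁻¹ * (B * Bᵀ))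
    (hΔ : Δ = Xs - X) :
    IsUnit (1 - Bs * (Δ ⊗ₖ (1 : Matrix (Fin r) (Fin r) ℝ))) ∧
    Dop A B C Xs - Dop A B C X =
      Asᵀ * (Δ ⊗ₖ (1 : Matrix (Fin r) (Fin r) ℝ)) *
        (1 - Bs * (Δ ⊗ₖ (1 : Matrix (Fin r) (Fin r) ℝ)))⁻¹ * As ∧
    (IsUnit (1 + Bᵀ * (Xs ⊗ₖ (1 : Matrix (Fin r) (Fin r) ℝ)) * B) →
      Bs = B * (1 + Bᵀ * (Xs ⊗ₖ (1 : Matrix (Fin r) (Fin r) ℝ)) * B)⁻¹ * Bᵀ ∧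
      (Xs.PosSemidef → Bs.PosSemidef)) := by
  set Y := Xs ⊗ₖ (1 : Matrix (Fin r) (Fin r) ℝ)
  set Z := X ⊗ₖ (1 : Matrix (Fin r) (Fin r) ℝ)
  have hS : (B * Bᵀ).IsSymm := by rw [IsSymm, transpose_mul, transpose_transpose]
  have hY : Y.IsSymm := IsSymm.kronecker (show Xsᵀ = Xs by simpa using hXs.eq) isSymm_one
  have hBsΔ : Bs * (Δ ⊗ₖ 1) = (1 + B * Bᵀ * Y)⁻¹ * (B * Bᵀ) * (Y - Z) := by
    rw [hBs, hΔ, sub_kronecker_s4]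
  refine ⟨hBsΔ ▸ isUnit_one_sub_inv_one_add_mul_mul_sub hKs hK, ?_, fun hM => ?_⟩
  · rw [hBsΔ, hAs, hΔ, sub_kronecker_s4, Dop, Dop, add_sub_add_right_eq_sub]
    exact riccatiTerm_sub hS hY hKs hK A
  · have hpush : (1 + B * Bᵀ * Y) * B = B * (1 + Bᵀ * Y * B) := by
      simp only [Matrix.add_mul, Matrix.mul_add, Matrix.one_mul, Matrix.mul_one, Matrix.mul_assoc]
    have hBs' : Bs = B * (1 + Bᵀ * Y * B)⁻¹ * Bᵀ := by
      rw [hBs, ← Matrix.mul_assoc, inv_mul_eq_mul_inv_of_mul_eq_mul hKs hM hpush]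
    refine ⟨hBs', fun hPSD => ?_⟩
    simpa only [hBs', conjTranspose_eq_transpose_of_trivial] using
      (hPSD.kronecker PosSemidef.one).mul_inv_one_add_conjTranspose_mul_mul_mul_conjTranspose B

theorem stmt4 {n m l r : ℕ} (hn : 0 < n) (hm : 0 < m) (hl : 0 < l) (hr : 0 < r)
    (A : Matrix (Fin n × Fin r) (Fin n) ℝ)
    (B : Matrix (Fin n × Fin r) (Fin m) ℝ)
    (C : Matrix (Fin l) (Fin n) ℝ)
    (Xs X : Matrix (Fin n) (Fin n) ℝ)
    (hXs : Xs.IsHermitian) (hX : X.IsHermitian)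
    (hKs : IsUnit (1 + B * Bᵀ * (Xs ⊗ₖ (1 : Matrix (Fin r) (Fin r) ℝ))))
    (hK : IsUnit (1 + B * Bᵀ * (X ⊗ₖ (1 : Matrix (Fin r) (Fin r) ℝ))))
    (As : Matrix (Fin n × Fin r) (Fin n) ℝ)
    (Bs : Matrix (Fin n × Fin r) (Fin n × Fin r) ℝ)
    (Δ : Matrix (Fin n) (Fin n) ℝ)
    (hAs : As = (1 + B * Bᵀ * (Xs ⊗ₖ (1 : Matrix (Fin r) (Fin r) ℝ)))⁻¹ * A)
    (hBs : Bs = (1 + B * Bᵀ * (Xs ⊗ₖ (1 : Matrix (Fin r) (Fin r) ℝ)))⁻¹ * (B * Bᵀ))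
    (hΔ : Δ = Xs - X) :
    IsUnit (1 - Bs * (Δ ⊗ₖ (1 : Matrix (Fin r) (Fin r) ℝ))) ∧
    Dop A B C Xs - Dop A B C X =
      Asᵀ * (Δ ⊗ₖ (1 : Matrix (Fin r) (Fin r) ℝ)) *
        (1 - Bs * (Δ ⊗ₖ (1 : Matrix (Fin r) (Fin r) ℝ)))⁻¹ * As ∧
    (IsUnit (1 + Bᵀ * (Xs ⊗ₖ (1 : Matrix (Fin r) (Fin r) ℝ)) * B) →
      Bs = B * (1 + Bᵀ * (Xs ⊗ₖ (1 : Matrix (Fin r) (Fin r) ℝ)) * B)⁻¹ * Bᵀ ∧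
      (Xs.PosSemidef → Bs.PosSemidef)) :=
  stmt4_general A B C Xs X hXs hKs hK As Bs Δ hAs hBs hΔ
end
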